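/- arXiv:1706.05161 — 3 statements merged into one kernel-verified Lean document; each statement's English description precedes it below -/
import Mathlib

section
/- Let G be a simple graph on a finite vertex set V, let X be a NIC crossing structure on G, and let D be an orientation of a set of unordered vertex pairs that includes all cycle edges of all pairs of X (each such pair {a,b} gets exactly one direction, (a,b) or (b,a)), such that every vertex has at most 3 pairs directed away from it under D. Then there exists a choice function r assigning to each pair p ∈ X one of its two edges (the 'red' edge) such that every vertex of V is an endpoint of at most 3 of the chosen edges {r(p) : p ∈ X}. (This is the combinatorial core of Theorem 1: every 3-connected NIC-plane graph admits an edge partition whose red graph has maximum vertex degree 3.) -/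
/-- A crossing pair of a simple graph `G`: an unordered pair of edges of `G`
whose four endpoints are pairwise distinct. -/
def IsCrossingPair {V : Type*} (G : SimpleGraph V) (p : Sym2 (Sym2 V)) : Prop :=
  ∃ u v w z : V, p = s(s(u, v), s(w, z)) ∧
    u ≠ v ∧ u ≠ w ∧ u ≠ z ∧ v ≠ w ∧ v ≠ z ∧ w ≠ z ∧
    G.Adj u v ∧ G.Adj w z

/-- The endpoint set `N(p)` of a pair of edges `p`. -/
def pairEndpoints {V : Type*} (p : Sym2 (Sym2 V)) : Set V :=
  {x | ∃ e ∈ p, x ∈ e}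

/-- `q` is a cycle edge of the pair of edges `p = {e, f}`: `q = {a, b}` with
`a` an endpoint of `e` and `b` an endpoint of `f`. -/
def IsCycleEdgeOf {V : Type*} (p : Sym2 (Sym2 V)) (q : Sym2 V) : Prop :=
  ∃ e f : Sym2 V, p = s(e, f) ∧ e ≠ f ∧ ∃ a b : V, a ∈ e ∧ b ∈ f ∧ q = s(a, b)

/-- if `G` is a simple graph on a finite vertex set, `X` a NIC
crossing structure on `G`, and `D` an orientation of a set of unordered vertex
pairs including all cycle edges of all pairs of `X` in which every vertex has
outdegree at most 3, then one edge of each pair of `X` can be colored red so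
that every vertex is an endpoint of at most 3 red edges. -/
theorem nic_degree_three_edge_partition {V : Type*} [Fintype V]
    (G : SimpleGraph V) (X : Set (Sym2 (Sym2 V)))
    (hX : ∀ p ∈ X, IsCrossingPair G p)
    (hdisj : ∀ p ∈ X, ∀ q ∈ X, ∀ e : Sym2 V, e ∈ p → e ∈ q → p = q)
    (hNIC : ∀ p ∈ X, ∀ q ∈ X, p ≠ q →
      (pairEndpoints p ∩ pairEndpoints q).Subsingleton)
    (D : V → V → Prop)
    (hasym : ∀ a b : V, ¬ (D a b ∧ D b a))
    (hcover : ∀ p ∈ X, ∀ a b : V, IsCycleEdgeOf p s(a, b) → D a b ∨ D b a)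
    (houtdeg : ∀ a : V, Set.ncard {b : V | D a b} ≤ 3) :
    ∃ r : Sym2 (Sym2 V) → Sym2 V, (∀ p ∈ X, r p ∈ p) ∧
      ∀ v : V, Set.ncard {e : Sym2 V | (∃ p ∈ X, r p = e) ∧ v ∈ e} ≤ 3 := by
  classical
  have key : ∀ p : Sym2 (Sym2 V), ∃ e : Sym2 V, p ∈ X →
      e ∈ p ∧ ∀ x ∈ e, ∃ y, y ∈ pairEndpoints p ∧ D x y := by
    intro p
    induction p using Sym2.ind with
    | _ e0 f0 =>
      by_cases hp : s(e0, f0) ∈ X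
      · obtain ⟨u, v, w, z, hpe, huv, huw, huz, hvw, hvz, hwz, -, -⟩ := hX _ hp
        rw [hpe] at hp ⊢
        have hefne : s(u, v) ≠ s(w, z) := by
          intro h
          have hmu : u ∈ s(w, z) := h ▸ Sym2.mem_mk_left u v
          rw [Sym2.mem_iff] at hmu
          tauto
        have he1 : s(u, v) ∈ s(s(u, v), s(w, z)) := Sym2.mem_mk_left _ _
        have he2 : s(w, z) ∈ s(s(u, v), s(w, z)) := Sym2.mem_mk_right _ _
        have hNu : u ∈ pairEndpoints s(s(u, v), s(w, z)) := ⟨s(u, v), he1, Sym2.mem_mk_left _ _⟩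
        have hNv : v ∈ pairEndpoints s(s(u, v), s(w, z)) := ⟨s(u, v), he1, Sym2.mem_mk_right _ _⟩
        have hNw : w ∈ pairEndpoints s(s(u, v), s(w, z)) := ⟨s(w, z), he2, Sym2.mem_mk_left _ _⟩
        have hNz : z ∈ pairEndpoints s(s(u, v), s(w, z)) := ⟨s(w, z), he2, Sym2.mem_mk_right _ _⟩
        have hce : ∀ a b : V, a ∈ s(u, v) → b ∈ s(w, z) →
            IsCycleEdgeOf (s(s(u, v), s(w, z))) s(a, b) :=
          fun a b ha hb => ⟨s(u, v), s(w, z), rfl, hefne, a, b, ha, hb, rfl⟩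
        have o1 := hcover _ hp u w (hce u w (Sym2.mem_mk_left _ _) (Sym2.mem_mk_left _ _))
        have o2 := hcover _ hp u z (hce u z (Sym2.mem_mk_left _ _) (Sym2.mem_mk_right _ _))
        have o3 := hcover _ hp v w (hce v w (Sym2.mem_mk_right _ _) (Sym2.mem_mk_left _ _))
        have o4 := hcover _ hp v z (hce v z (Sym2.mem_mk_right _ _) (Sym2.mem_mk_right _ _))
        by_cases hu : D u w ∨ D u z
        · by_cases hv2 : D v w ∨ D v z
          · refine ⟨s(u, v), fun _ => ⟨he1, fun x hx => ?_⟩⟩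
            rw [Sym2.mem_iff] at hx
            rcases hx with rfl | rfl
            · rcases hu with h | h
              · exact ⟨w, hNw, h⟩
              · exact ⟨z, hNz, h⟩
            · rcases hv2 with h | h
              · exact ⟨w, hNw, h⟩
              · exact ⟨z, hNz, h⟩
          · push_neg at hv2
            refine ⟨s(w, z), fun _ => ⟨he2, fun x hx => ?_⟩⟩
            rw [Sym2.mem_iff] at hx
            rcases hx with rfl | rfl
            · exact ⟨v, hNv, o3.resolve_left hv2.1⟩
            · exact ⟨v, hNv, o4.resolve_left hv2.2⟩
        · push_neg at hu
          refine ⟨s(w, z), fun _ => ⟨he2, fun x hx => ?_⟩⟩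
          rw [Sym2.mem_iff] at hx
          rcases hx with rfl | rfl
          · exact ⟨u, hNu, o1.resolve_left hu.1⟩
          · exact ⟨u, hNu, o2.resolve_left hu.2⟩
      · exact ⟨e0, fun h => absurd h hp⟩
  choose r hr using key
  refine ⟨r, fun p hp => (hr p hp).1, fun v => ?_⟩
  have hsel : ∀ e : Sym2 V, ∃ y : V, ((∃ p ∈ X, r p = e) ∧ v ∈ e) →
      D v y ∧ ∃ p ∈ X, r p = e ∧ y ∈ pairEndpoints p ∧ v ∈ pairEndpoints p := by
    intro e
    by_cases he : (∃ p ∈ X, r p = e) ∧ v ∈ e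
    · obtain ⟨⟨p, hpX, hrp⟩, hve⟩ := he
      obtain ⟨hep, hall⟩ := hr p hpX
      obtain ⟨y, hyN, hDy⟩ := hall v (hrp ▸ hve)
      exact ⟨y, fun _ => ⟨hDy, p, hpX, hrp, hyN, ⟨e, hrp ▸ hep, hve⟩⟩⟩
    · exact ⟨v, fun h => absurd h he⟩
  choose g hg using hsel
  refine le_trans (Set.ncard_le_ncard_of_injOn g (fun e he => (hg e he).1) ?_ (Set.toFinite _))
    (houtdeg v)
  intro e1 h1 e2 h2 heq
  obtain ⟨hD1, p1, hp1, hre1, hy1, hv1⟩ := hg e1 h1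
  obtain ⟨hD2, p2, hp2, hre2, hy2, hv2⟩ := hg e2 h2
  by_cases hpp : p1 = p2
  · rw [← hre1, ← hre2, hpp]
  · exfalso
    have hne : g e1 ≠ v := by
      intro h
      exact hasym v v ⟨h ▸ hD1, h ▸ hD1⟩
    exact hne (hNIC p1 hp1 p2 hp2 hpp ⟨hy1, heq ▸ hy2⟩ ⟨hv1, hv2⟩)
end

section
/- Let (G, X) be a crossing structure on a finite vertex set V such that for any two distinct pairs p, q ∈ X the cycle-edge sets of p and q are disjoint. Let D be an orientation of a set of unordered vertex pairs that includes all cycle edges of all pairs of X, such that every vertex has outdegree at most 3 under D. Suppose r assigns to each pair p ∈ X one of its two edges in such a way that each of the two endpoints of r(p) has at least one cycle edge of p directed away from it under D. Then every vertex of V is an endpoint of at most 3 of the edges {r(p) : p ∈ X}. (Charging step in the proof of Theorem 1.) -/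
/-- charging step in the proof of Theorem 1: if `(G, X)` is a
crossing structure in which distinct pairs have disjoint cycle-edge sets, `D`
is an orientation covering all cycle edges with outdegree at most 3 at every
vertex, and `r` chooses for each pair `p ∈ X` one of its two edges so that
both endpoints of `r p` have a cycle edge of `p` directed away from them,
then every vertex is an endpoint of at most 3 chosen edges. -/
theorem charging_step {V : Type*} [Fintype V]
    (G : SimpleGraph V) (X : Set (Sym2 (Sym2 V)))
    (hX : ∀ p ∈ X, IsCrossingPair G p)
    (hdisj : ∀ p ∈ X, ∀ q ∈ X, ∀ e : Sym2 V, e ∈ p → e ∈ q → p = q)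
    (hcyc : ∀ p ∈ X, ∀ q ∈ X, p ≠ q →
      ∀ e : Sym2 V, ¬ (IsCycleEdgeOf p e ∧ IsCycleEdgeOf q e))
    (D : V → V → Prop)
    (hasym : ∀ a b : V, ¬ (D a b ∧ D b a))
    (hcover : ∀ p ∈ X, ∀ a b : V, IsCycleEdgeOf p s(a, b) → D a b ∨ D b a)
    (houtdeg : ∀ a : V, Set.ncard {b : V | D a b} ≤ 3)
    (r : Sym2 (Sym2 V) → Sym2 V)
    (hr : ∀ p ∈ X, r p ∈ p)
    (hout : ∀ p ∈ X, ∀ a : V, a ∈ r p →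
      ∃ b : V, IsCycleEdgeOf p s(a, b) ∧ D a b) :
    ∀ v : V, Set.ncard {e : Sym2 V | (∃ p ∈ X, r p = e) ∧ v ∈ e} ≤ 3 := by
  classical
  intro v
  set S : Set (Sym2 V) := {e : Sym2 V | (∃ p ∈ X, r p = e) ∧ v ∈ e} with hS
  set T : Set V := {b : V | D v b} with hT
  -- property: b is a valid charge for e
  set P : Sym2 V → V → Prop :=
    fun e b => D v b ∧ ∃ p ∈ X, r p = e ∧ IsCycleEdgeOf p s(v, b) with hP
  have hex : ∀ e ∈ S, ∃ b, P e b := by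
    intro e he
    obtain ⟨⟨p, hpX, hrp⟩, hve⟩ := he
    obtain ⟨b, hcycb, hDb⟩ := hout p hpX v (hrp ▸ hve)
    exact ⟨b, hDb, p, hpX, hrp, hcycb⟩
  set f : Sym2 V → V := fun e => if h : ∃ b, P e b then h.choose else v with hf
  have hfP : ∀ e ∈ S, P e (f e) := by
    intro e he
    have h := hex e he
    simp only [hf, dif_pos h]
    exact h.choose_spec
  have hmaps : ∀ e ∈ S, f e ∈ T := fun e he => (hfP e he).1
  have hinj : Set.InjOn f S := by
    intro e1 he1 e2 he2 hfe
    obtain ⟨_, p1, hp1X, hrp1, hc1⟩ := hfP e1 he1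
    obtain ⟨_, p2, hp2X, hrp2, hc2⟩ := hfP e2 he2
    by_cases hpq : p1 = p2
    · rw [← hrp1, ← hrp2, hpq]
    · exact absurd ⟨hc1, hfe ▸ hc2⟩ (hcyc p1 hp1X p2 hp2X hpq s(v, f e1))
  calc S.ncard ≤ T.ncard :=
        Set.ncard_le_ncard_of_injOn f hmaps hinj (Set.toFinite T)
    _ ≤ 3 := houtdeg v
end

section
/- Let k ≥ 1 and let c : ZMod(2k) → Bool be a cyclic sequence of colors (true = red, false = blue). Suppose that for every i ∈ ZMod(2k), not both c(i) and c(i+1) are blue, and that for every m with 0 ≤ m < k, not both c(2m) and c(2m+1) are red. Then the sequence alternates: c(i) ≠ c(i+1) for every i ∈ ZMod(2k). (This is the combinatorial core of Lemma 2: in any degree-2 edge partition of a variable gadget, no variable edge and negated edge have the same color; equivalently, the colors of the 2k crossed edges (u_i,v_i) around the cycle alternate.) -/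
/-- combinatorial core of Lemma 2: let `k ≥ 1` and let
`c : ZMod (2k) → Bool` be a cyclic sequence of colors (`true` = red,
`false` = blue). If no two cyclically consecutive entries are both blue, and
no twin pair `(2m, 2m+1)` with `0 ≤ m < k` is both red, then the sequence
alternates: `c i ≠ c (i + 1)` for every `i`. -/
theorem variable_gadget_alternates (k : ℕ) (hk : 1 ≤ k)
    (c : ZMod (2 * k) → Bool)
    (hblue : ∀ i : ZMod (2 * k), ¬ (c i = false ∧ c (i + 1) = false))
    (hred : ∀ m : ℕ, m < k →
      ¬ (c ((2 * m : ℕ) : ZMod (2 * k)) = true ∧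
         c ((2 * m + 1 : ℕ) : ZMod (2 * k)) = true)) :
    ∀ i : ZMod (2 * k), c i ≠ c (i + 1) := by
  haveI : NeZero (2 * k) := ⟨by omega⟩
  -- if an even position is red, the next even position is red
  have step : ∀ m : ℕ, m < k → c ((2 * m : ℕ) : ZMod (2 * k)) = true →
      c ((2 * (m + 1) : ℕ) : ZMod (2 * k)) = true := by
    intro m hm h
    have h1 : c ((2 * m + 1 : ℕ) : ZMod (2 * k)) = false := by
      cases hc : c ((2 * m + 1 : ℕ) : ZMod (2 * k)) with
      | false => rfl
      | true => exact absurd ⟨h, hc⟩ (hred m hm)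
    have hb := hblue ((2 * m + 1 : ℕ) : ZMod (2 * k))
    have hcast : ((2 * m + 1 : ℕ) : ZMod (2 * k)) + 1 = ((2 * (m + 1) : ℕ) : ZMod (2 * k)) := by
      push_cast; ring
    rw [hcast] at hb
    cases hc : c ((2 * (m + 1) : ℕ) : ZMod (2 * k)) with
    | true => rfl
    | false => exact absurd ⟨h1, hc⟩ hb
  have propUp : ∀ m j : ℕ, m + j ≤ k → c ((2 * m : ℕ) : ZMod (2 * k)) = true →
      c ((2 * (m + j) : ℕ) : ZMod (2 * k)) = true := by
    intro m j
    induction j with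
    | zero => intro _ h; simpa using h
    | succ n ih =>
      intro hle h
      have := step (m + n) (by omega) (ih (by omega) h)
      exact this
  have h2k : ((2 * k : ℕ) : ZMod (2 * k)) = ((0 : ℕ) : ZMod (2 * k)) := by
    simp [ZMod.natCast_self]
  -- the even positions are constant
  have even_const : ∀ m : ℕ, m < k →
      c ((2 * m : ℕ) : ZMod (2 * k)) = c ((0 : ℕ) : ZMod (2 * k)) := by
    intro m hm
    cases h0 : c ((0 : ℕ) : ZMod (2 * k)) with
    | true =>
      have := propUp 0 m (by omega) (by rw [Nat.mul_zero]; exact h0)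
      rw [Nat.zero_add] at this
      exact this
    | false =>
      by_contra hne
      have hm' : c ((2 * m : ℕ) : ZMod (2 * k)) = true := by
        cases hc : c ((2 * m : ℕ) : ZMod (2 * k)) with
        | true => rfl
        | false => exact (hne hc).elim
      have := propUp m (k - m) (by omega) hm'
      rw [show m + (k - m) = k from by omega, h2k, h0] at this
      exact Bool.false_ne_true this
  -- the odd positions are the negation
  have odd_neg : ∀ m : ℕ, m < k →
      c ((2 * m + 1 : ℕ) : ZMod (2 * k)) = !(c ((2 * m : ℕ) : ZMod (2 * k))) := by
    intro m hm
    cases he : c ((2 * m : ℕ) : ZMod (2 * k)) with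
    | true =>
      cases hc : c ((2 * m + 1 : ℕ) : ZMod (2 * k)) with
      | false => rfl
      | true => exact absurd ⟨he, hc⟩ (hred m hm)
    | false =>
      have hb := hblue ((2 * m : ℕ) : ZMod (2 * k))
      have hcast : ((2 * m : ℕ) : ZMod (2 * k)) + 1 = ((2 * m + 1 : ℕ) : ZMod (2 * k)) := by
        push_cast; ring
      rw [hcast] at hb
      cases hc : c ((2 * m + 1 : ℕ) : ZMod (2 * k)) with
      | true => rfl
      | false => exact absurd ⟨he, hc⟩ hb
  intro i
  have hival : ((i.val : ℕ) : ZMod (2 * k)) = i := ZMod.natCast_rightInverse i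
  have hlt : i.val < 2 * k := ZMod.val_lt i
  rcases Nat.even_or_odd i.val with ⟨m, hmeq⟩ | ⟨m, hmeq⟩
  · -- i = 2m
    have hm : m < k := by omega
    have h1 : i = ((2 * m : ℕ) : ZMod (2 * k)) := by
      rw [← hival, hmeq]; push_cast; ring_nf
    have h2 : i + 1 = ((2 * m + 1 : ℕ) : ZMod (2 * k)) := by
      rw [h1]; push_cast; ring
    rw [h2, h1, odd_neg m hm]
    cases c ((2 * m : ℕ) : ZMod (2 * k)) <;> simp
  · -- i = 2m + 1
    have hm : m < k := by omega
    have h1 : i = ((2 * m + 1 : ℕ) : ZMod (2 * k)) := by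
      rw [← hival, hmeq]
    have h2 : i + 1 = ((2 * (m + 1) : ℕ) : ZMod (2 * k)) := by
      rw [h1]; push_cast; ring
    have hnext : c ((2 * (m + 1) : ℕ) : ZMod (2 * k)) = c ((2 * m : ℕ) : ZMod (2 * k)) := by
      rcases Nat.lt_or_ge (m + 1) k with h | h
      · rw [even_const (m + 1) h, even_const m hm]
      · have : m + 1 = k := by omega
        rw [this, h2k]
        rw [even_const m hm]
    rw [h2, h1, hnext, odd_neg m hm]
    cases c ((2 * m : ℕ) : ZMod (2 * k)) <;> simp
end
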